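/- arXiv:2204.02052 — 3 statements merged into one kernel-verified Lean document; each statement's English description precedes it below -/
import Mathlib

section
/- Let σ and y be smooth complex-valued functions on an open interval and let i, k ≥ 0 be integers. Then (σ^{(i)}·y^{(k)})^{(k)} = Σ_{s=0}^{i} (-1)^s · C(i,s) · (σ·y^{(s+k)})^{(i-s+k)}. -/
open scoped BigOperators

lemma pascal_sum (T : ℕ → ℂ) (i : ℕ) :
    ∑ s ∈ Finset.range (i+2), (-1:ℂ)^s * ((i+1).choose s : ℂ) * T s
    = ∑ s ∈ Finset.range (i+1), (-1:ℂ)^s * (i.choose s : ℂ) * T s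
      - ∑ s ∈ Finset.range (i+1), (-1:ℂ)^s * (i.choose s : ℂ) * T (s+1) := by
  rw [Finset.sum_range_succ' (fun s => (-1:ℂ)^s * ((i+1).choose s : ℂ) * T s) (i+1),
      Finset.sum_range_succ' (fun s => (-1:ℂ)^s * (i.choose s : ℂ) * T s) i]
  have hc : ∀ s : ℕ, (((i+1).choose (s+1) : ℕ) : ℂ) = (i.choose s : ℂ) + (i.choose (s+1) : ℂ) := by
    intro s; rw [Nat.choose_succ_succ]; push_cast; ring
  have hsplit : ∀ s ∈ Finset.range (i+1),
      (-1:ℂ)^(s+1) * ((i+1).choose (s+1) : ℂ) * T (s+1)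
      = (-1:ℂ)^(s+1) * (i.choose s : ℂ) * T (s+1)
        + (-1:ℂ)^(s+1) * (i.choose (s+1) : ℂ) * T (s+1) := by
    intro s _; rw [hc]; ring
  rw [Finset.sum_congr rfl hsplit, Finset.sum_add_distrib]
  have h2 : ∑ s ∈ Finset.range (i+1), (-1:ℂ)^(s+1) * (i.choose (s+1) : ℂ) * T (s+1)
      = ∑ s ∈ Finset.range i, (-1:ℂ)^(s+1) * (i.choose (s+1) : ℂ) * T (s+1) := by
    rw [Finset.sum_range_succ]; simp [Nat.choose_succ_self]
  have h3 : ∑ s ∈ Finset.range (i+1), (-1:ℂ)^(s+1) * (i.choose s : ℂ) * T (s+1)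
      = - ∑ s ∈ Finset.range (i+1), (-1:ℂ)^s * (i.choose s : ℂ) * T (s+1) := by
    rw [← Finset.sum_neg_distrib]; apply Finset.sum_congr rfl; intro s _; ring
  rw [h2, h3]
  simp only [pow_zero, Nat.choose_zero_right, Nat.cast_one, one_mul, mul_one]
  ring

section aux
variable {S : Set ℝ} (hu : UniqueDiffOn ℝ S)
include hu

lemma smooth_iter {f : ℝ → ℂ} (hf : ContDiffOn ℝ (⊤:ℕ∞) f S) (i : ℕ) :
    ContDiffOn ℝ (⊤:ℕ∞) (iteratedDerivWithin i f S) S := by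
  induction i with
  | zero => simpa [iteratedDerivWithin_zero] using hf
  | succ n ih =>
      have h1 : ContDiffOn ℝ (⊤:ℕ∞) (derivWithin (iteratedDerivWithin n f S) S) S :=
        ih.derivWithin hu (by simp)
      exact h1.congr fun x hx => by rw [iteratedDerivWithin_succ]

lemma iter_comp {f : ℝ → ℂ} (s k : ℕ) :
    ∀ x ∈ S, iteratedDerivWithin s (iteratedDerivWithin k f S) S x
      = iteratedDerivWithin (s + k) f S x := by
  induction s with
  | zero => intro x hx; simp
  | succ n ih =>
      intro x hx
      rw [iteratedDerivWithin_succ, show n + 1 + k = (n + k) + 1 by ring,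
        iteratedDerivWithin_succ]
      exact derivWithin_congr ih (ih x hx)

lemma key {σ : ℝ → ℂ} (hσ : ContDiffOn ℝ (⊤:ℕ∞) σ S) :
    ∀ (i : ℕ) (f : ℝ → ℂ), ContDiffOn ℝ (⊤:ℕ∞) f S → ∀ (k : ℕ), ∀ x ∈ S,
      iteratedDerivWithin k (fun t => iteratedDerivWithin i σ S t * f t) S x
      = ∑ s ∈ Finset.range (i+1), (-1:ℂ)^s * (i.choose s : ℂ) *
          iteratedDerivWithin (i - s + k) (fun t => σ t * iteratedDerivWithin s f S t) S x := by
  intro i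
  induction i with
  | zero =>
      intro f hf k x hx
      simp only [Finset.range_one, Finset.sum_singleton, pow_zero, Nat.choose_self,
        Nat.cast_one, one_mul, Nat.zero_sub, Nat.zero_add, iteratedDerivWithin_zero]
  | succ i ih =>
      intro f hf k x hx
      -- rewrite σ^{(i+1)} f as derivWithin(σ^{(i)} f) - σ^{(i)} f'
      set g : ℝ → ℂ := fun t => iteratedDerivWithin i σ S t * f t with hg
      set h : ℝ → ℂ := fun t => iteratedDerivWithin i σ S t * derivWithin f S t with hh
      have hσi : ContDiffOn ℝ (⊤:ℕ∞) (iteratedDerivWithin i σ S) S := smooth_iter hu hσ i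
      have hf' : ContDiffOn ℝ (⊤:ℕ∞) (derivWithin f S) S := hf.derivWithin hu (by simp)
      have hgS : ContDiffOn ℝ (⊤:ℕ∞) g S := hσi.mul hf
      have hdg : ContDiffOn ℝ (⊤:ℕ∞) (derivWithin g S) S := hgS.derivWithin hu (by simp)
      have hhS : ContDiffOn ℝ (⊤:ℕ∞) h S := hσi.mul hf'
      have heq : Set.EqOn (fun t => iteratedDerivWithin (i+1) σ S t * f t)
          (derivWithin g S - h) S := by
        intro t ht
        have hmul : derivWithin g S t
            = derivWithin (iteratedDerivWithin i σ S) S t * f t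
              + iteratedDerivWithin i σ S t * derivWithin f S t :=
          derivWithin_fun_mul
            ((hσi.differentiableOn (by simp)) t ht)
            ((hf.differentiableOn (by simp)) t ht)
        simp only [Pi.sub_apply, hmul, hh]
        rw [iteratedDerivWithin_succ]
        ring
      calc iteratedDerivWithin k (fun t => iteratedDerivWithin (i+1) σ S t * f t) S x
          = iteratedDerivWithin k (derivWithin g S - h) S x :=
            iteratedDerivWithin_congr heq hx
        _ = iteratedDerivWithin k (derivWithin g S) S x - iteratedDerivWithin k h S x :=
            iteratedDerivWithin_sub hx hu ((hdg.contDiffWithinAt hx).of_le (by exact_mod_cast le_top)) ((hhS.contDiffWithinAt hx).of_le (by exact_mod_cast le_top))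
        _ = iteratedDerivWithin (k+1) g S x - iteratedDerivWithin k h S x := by
            rw [iteratedDerivWithin_succ']
        _ = _ := by
            rw [ih f hf (k+1) x hx, ih (derivWithin f S) hf' k x hx]
            set T : ℕ → ℂ := fun s => iteratedDerivWithin (i+1-s+k)
                (fun t => σ t * iteratedDerivWithin s f S t) S x with hT
            have ha : ∀ s ∈ Finset.range (i+1),
                (-1:ℂ)^s * (i.choose s : ℂ) * iteratedDerivWithin (i-s+(k+1))
                  (fun t => σ t * iteratedDerivWithin s f S t) S x
                = (-1:ℂ)^s * (i.choose s : ℂ) * T s := by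
              intro s hs
              have hidx : i - s + (k+1) = i+1-s+k := by
                have := Finset.mem_range.1 hs; omega
              rw [hT, hidx]
            have hb : ∀ s ∈ Finset.range (i+1),
                (-1:ℂ)^s * (i.choose s : ℂ) * iteratedDerivWithin (i-s+k)
                  (fun t => σ t * iteratedDerivWithin s (derivWithin f S) S t) S x
                = (-1:ℂ)^s * (i.choose s : ℂ) * T (s+1) := by
              intro s hs
              have hidx : i - s + k = i+1-(s+1)+k := by
                have := Finset.mem_range.1 hs; omega
              have hfun : Set.EqOn (fun t => σ t * iteratedDerivWithin s (derivWithin f S) S t)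
                  (fun t => σ t * iteratedDerivWithin (s+1) f S t) S := by
                intro t ht
                simp only [iteratedDerivWithin_succ']
              rw [hT, hidx, iteratedDerivWithin_congr hfun hx]
            rw [Finset.sum_congr rfl ha, Finset.sum_congr rfl hb]
            exact (pascal_sum T i).symm

end aux

/-- for smooth σ, y on an open interval and i, k ≥ 0,
(σ^{(i)}·y^{(k)})^{(k)} = Σ_{s=0}^{i} (-1)^s C(i,s) (σ·y^{(s+k)})^{(i-s+k)}. -/
theorem stmt1 (a b : ℝ) (S : Set ℝ) (hS : S = Set.Ioo a b)
    (σ y : ℝ → ℂ) (hσ : ContDiffOn ℝ (⊤ : ℕ∞) σ S) (hy : ContDiffOn ℝ (⊤ : ℕ∞) y S) (i k : ℕ) :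
    ∀ x ∈ S,
      iteratedDerivWithin k
        (fun t => iteratedDerivWithin i σ S t * iteratedDerivWithin k y S t) S x =
        ∑ s ∈ Finset.range (i + 1),
          (-1 : ℂ) ^ s * (i.choose s : ℂ) *
            iteratedDerivWithin (i - s + k)
              (fun t => σ t * iteratedDerivWithin (s + k) y S t) S x := by
  intro x hx
  have hu : UniqueDiffOn ℝ S := by rw [hS]; exact (isOpen_Ioo).uniqueDiffOn
  have hσ' : ContDiffOn ℝ (⊤:ℕ∞) σ S := hσ.of_le (by simp)
  have hy' : ContDiffOn ℝ (⊤:ℕ∞) y S := hy.of_le (by simp)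
  have hfk : ContDiffOn ℝ (⊤:ℕ∞) (iteratedDerivWithin k y S) S := smooth_iter hu hy' k
  rw [key hu hσ' i (iteratedDerivWithin k y S) hfk k x hx]
  refine Finset.sum_congr rfl fun s hs => ?_
  congr 1
  refine iteratedDerivWithin_congr (fun t ht => ?_) hx
  simp only [iter_comp hu s k t ht]
end

section
/- Let σ and y be smooth complex-valued functions on an open interval and let i, k ≥ 0 be integers. Then (σ^{(i)}·y^{(k)})^{(k+1)} + (σ^{(i)}·y^{(k+1)})^{(k)} = Σ_{s=0}^{i+1} (-1)^s · (C(i+1,s) − 2·C(i,s−1)) · (σ·y^{(s+k)})^{(i+1−s+k)}, where C(i,−1) := 0. -/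
open scoped BigOperators

section Aux

variable {S : Set ℝ}

private lemma aux_top_add_one : ((⊤ : ℕ∞) : WithTop ℕ∞) + 1 ≤ ((⊤ : ℕ∞) : WithTop ℕ∞) := by
  exact_mod_cast le_top

/-- iterated derivative of iterated derivative. -/
private lemma aux_iterIter (hs : UniqueDiffOn ℝ S) (f : ℝ → ℂ) (m n : ℕ) :
    ∀ x ∈ S, iteratedDerivWithin m (iteratedDerivWithin n f S) S x
      = iteratedDerivWithin (m + n) f S x := by
  induction m with
  | zero => intro x hx; simp
  | succ m ih =>
    intro x hx
    rw [show m + 1 + n = (m + n) + 1 by omega]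
    rw [iteratedDerivWithin_succ,
      iteratedDerivWithin_succ]
    exact derivWithin_congr (fun y hy => ih y hy) (ih x hx)

/-- smoothness of iterated derivatives. -/
private lemma aux_smooth_iter (hs : UniqueDiffOn ℝ S) {f : ℝ → ℂ}
    (hf : ContDiffOn ℝ (⊤ : ℕ∞) f S) (n : ℕ) :
    ContDiffOn ℝ (⊤ : ℕ∞) (iteratedDerivWithin n f S) S := by
  induction n with
  | zero => simpa using hf
  | succ n ih =>
    exact (ih.derivWithin hs aux_top_add_one).congr
      (fun x hx => congrFun iteratedDerivWithin_succ x)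

/-- iterated derivative of a finite sum. -/
private lemma aux_iter_sum (hs : UniqueDiffOn ℝ S) {ι : Type} (u : Finset ι)
    (F : ι → ℝ → ℂ) (n : ℕ) :
    (∀ j ∈ u, ContDiffOn ℝ (⊤ : ℕ∞) (F j) S) → ∀ x ∈ S,
      iteratedDerivWithin n (fun t => ∑ j ∈ u, F j t) S x
        = ∑ j ∈ u, iteratedDerivWithin n (F j) S x := by
  classical
  induction u using Finset.induction_on with
  | empty =>
    intro _ x hx
    simp only [Finset.sum_empty]
    have h0 : iteratedDerivWithin n (fun _ : ℝ => (0 : ℂ)) S x = 0 := by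
      rw [iteratedDerivWithin_eq_iteratedFDerivWithin,
        iteratedFDerivWithin_zero_fun]
      simp
    exact h0
  | insert c u ha ih =>
    intro hF x hx
    have h1 : ContDiffOn ℝ (n : WithTop ℕ∞) (F c) S :=
      (hF c (Finset.mem_insert_self c u)).of_le (by exact_mod_cast le_top)
    have h2 : ContDiffOn ℝ (n : WithTop ℕ∞) (fun t => ∑ j ∈ u, F j t) S :=
      (ContDiffOn.sum fun j hj => hF j (Finset.mem_insert_of_mem hj)).of_le (by exact_mod_cast le_top)
    simp only [Finset.sum_insert ha]
    calc iteratedDerivWithin n (fun t => F c t + ∑ j ∈ u, F j t) S x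
        = iteratedDerivWithin n (F c) S x
            + iteratedDerivWithin n (fun t => ∑ j ∈ u, F j t) S x :=
          iteratedDerivWithin_add hx hs (h1 x hx) (h2 x hx)
      _ = _ := by
          rw [ih (fun j hj => hF j (Finset.mem_insert_of_mem hj)) x hx]

/-- iterated derivative of constant times a function. -/
private lemma aux_iter_cmul (hs : UniqueDiffOn ℝ S) {f : ℝ → ℂ}
    (hf : ContDiffOn ℝ (⊤ : ℕ∞) f S) (c : ℂ) (n : ℕ) {x : ℝ} (hx : x ∈ S) :
    iteratedDerivWithin n (fun t => c * f t) S x = c * iteratedDerivWithin n f S x := by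
  have := iteratedDerivWithin_const_smul (R := ℂ) hx hs c ((hf.of_le (by exact_mod_cast le_top : (n : WithTop ℕ∞) ≤ ((⊤ : ℕ∞) : WithTop ℕ∞))) x hx)
  simpa [smul_eq_mul] using this

/-- Pascal-type algebraic identity. -/
private lemma aux_pascal (i : ℕ) (B : ℕ → ℂ) :
    (∑ s ∈ Finset.range (i + 1), (-1 : ℂ) ^ s * (i.choose s : ℂ) * B s)
      - ∑ s ∈ Finset.range (i + 1), (-1 : ℂ) ^ s * (i.choose s : ℂ) * B (s + 1)
    = ∑ s ∈ Finset.range (i + 2), (-1 : ℂ) ^ s * ((i + 1).choose s : ℂ) * B s := by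
  have hext : (∑ s ∈ Finset.range (i + 2), (-1 : ℂ) ^ s * (i.choose s : ℂ) * B s)
      = ∑ s ∈ Finset.range (i + 1), (-1 : ℂ) ^ s * (i.choose s : ℂ) * B s := by
    rw [Finset.sum_range_succ, Nat.choose_eq_zero_of_lt (Nat.lt_succ_self i)]
    simp only [Nat.cast_zero, mul_zero, zero_mul, add_zero]
  have e2 : (∑ s ∈ Finset.range (i + 2), (-1 : ℂ) ^ s * (i.choose s : ℂ) * B s)
      = (∑ s ∈ Finset.range (i + 1), (-1 : ℂ) ^ (s + 1) * (i.choose (s + 1) : ℂ) * B (s + 1))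
        + B 0 := by
    rw [Finset.sum_range_succ' (fun s => (-1 : ℂ) ^ s * (i.choose s : ℂ) * B s) (i + 1)]
    simp
  have e1 : (∑ s ∈ Finset.range (i + 2), (-1 : ℂ) ^ s * ((i + 1).choose s : ℂ) * B s)
      = (∑ s ∈ Finset.range (i + 1),
            (-1 : ℂ) ^ (s + 1) * ((i + 1).choose (s + 1) : ℂ) * B (s + 1))
        + B 0 := by
    rw [Finset.sum_range_succ' (fun s => (-1 : ℂ) ^ s * ((i + 1).choose s : ℂ) * B s) (i + 1)]
    simp
  rw [← hext, e2, e1]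
  have hterm : ∀ s ∈ Finset.range (i + 1),
      (-1 : ℂ) ^ (s + 1) * ((i + 1).choose (s + 1) : ℂ) * B (s + 1)
        = (-1 : ℂ) ^ (s + 1) * (i.choose (s + 1) : ℂ) * B (s + 1)
          - (-1 : ℂ) ^ s * (i.choose s : ℂ) * B (s + 1) := by
    intro s _
    rw [Nat.choose_succ_succ i s, Nat.cast_add]
    ring
  rw [Finset.sum_congr rfl hterm, Finset.sum_sub_distrib]
  ring

/-- the key "inverse Leibniz" identity. -/
private lemma aux_key (hs : UniqueDiffOn ℝ S) {σ : ℝ → ℂ} (hσ : ContDiffOn ℝ (⊤ : ℕ∞) σ S) :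
    ∀ (i : ℕ) (g : ℝ → ℂ), ContDiffOn ℝ (⊤ : ℕ∞) g S → ∀ x ∈ S,
      iteratedDerivWithin i σ S x * g x
        = ∑ s ∈ Finset.range (i + 1), (-1 : ℂ) ^ s * (i.choose s : ℂ) *
            iteratedDerivWithin (i - s) (fun t => σ t * iteratedDerivWithin s g S t) S x := by
  intro i
  induction i with
  | zero =>
    intro g hg x hx
    simp
  | succ i ih =>
    intro g hg x hx
    have hxu := hs.uniqueDiffWithinAt hx
    have hσi : ContDiffOn ℝ (⊤ : ℕ∞) (iteratedDerivWithin i σ S) S := aux_smooth_iter hs hσ i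
    have hg' : ContDiffOn ℝ (⊤ : ℕ∞) (derivWithin g S) S := hg.derivWithin hs aux_top_add_one
    set P : ℕ → ℝ → ℂ := fun s t => σ t * iteratedDerivWithin s g S t with hP
    have hPs : ∀ s, ContDiffOn ℝ (⊤ : ℕ∞) (P s) S := fun s => hσ.mul (aux_smooth_iter hs hg s)
    have hdiffσi : DifferentiableWithinAt ℝ (iteratedDerivWithin i σ S) S x :=
      (hσi.differentiableOn (by simp)) x hx
    have hdiffg : DifferentiableWithinAt ℝ g S x := (hg.differentiableOn (by simp)) x hx
    have hmul : derivWithin (fun t => iteratedDerivWithin i σ S t * g t) S x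
        = derivWithin (iteratedDerivWithin i σ S) S x * g x
          + iteratedDerivWithin i σ S x * derivWithin g S x :=
      derivWithin_mul hdiffσi hdiffg
    have hC : derivWithin (fun t => iteratedDerivWithin i σ S t * g t) S x
        = ∑ s ∈ Finset.range (i + 1), (-1 : ℂ) ^ s * (i.choose s : ℂ) *
            iteratedDerivWithin (i - s + 1) (P s) S x := by
      have hcongr : derivWithin (fun t => iteratedDerivWithin i σ S t * g t) S x
          = derivWithin (fun t => ∑ s ∈ Finset.range (i + 1),
              (-1 : ℂ) ^ s * (i.choose s : ℂ) * iteratedDerivWithin (i - s) (P s) S t) S x :=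
        derivWithin_congr (fun t ht => ih g hg t ht) (ih g hg x hx)
      rw [hcongr]
      rw [derivWithin_fun_sum (fun s _ => by
        exact (((aux_smooth_iter hs (hPs s) (i - s)).differentiableOn (by simp)) x hx).const_mul _)]
      refine Finset.sum_congr rfl (fun s _ => ?_)
      rw [derivWithin_const_mul _
        (((aux_smooth_iter hs (hPs s) (i - s)).differentiableOn (by simp)) x hx)]
      rw [← iteratedDerivWithin_succ]
    have hD : iteratedDerivWithin i σ S x * derivWithin g S x
        = ∑ s ∈ Finset.range (i + 1), (-1 : ℂ) ^ s * (i.choose s : ℂ) *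
            iteratedDerivWithin (i - s) (P (s + 1)) S x := by
      rw [ih (derivWithin g S) hg' x hx]
      refine Finset.sum_congr rfl (fun s _ => ?_)
      congr 1
      refine iteratedDerivWithin_congr (fun u hu => ?_) hx
      show σ u * iteratedDerivWithin s (derivWithin g S) S u = P (s + 1) u
      rw [← iteratedDerivWithin_succ']
    have hLHS : iteratedDerivWithin (i + 1) σ S x * g x
        = (∑ s ∈ Finset.range (i + 1), (-1 : ℂ) ^ s * (i.choose s : ℂ) *
            iteratedDerivWithin (i - s + 1) (P s) S x)
          - ∑ s ∈ Finset.range (i + 1), (-1 : ℂ) ^ s * (i.choose s : ℂ) *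
            iteratedDerivWithin (i - s) (P (s + 1)) S x := by
      rw [iteratedDerivWithin_succ, ← hC, ← hD, hmul]; ring
    rw [hLHS]
    have hB1 : ∀ s ∈ Finset.range (i + 1),
        (-1 : ℂ) ^ s * (i.choose s : ℂ) * iteratedDerivWithin (i - s + 1) (P s) S x
          = (-1 : ℂ) ^ s * (i.choose s : ℂ) * iteratedDerivWithin (i + 1 - s) (P s) S x := by
      intro s hsmem
      have hle := Finset.mem_range.mp hsmem
      rw [show i - s + 1 = i + 1 - s by omega]
    have hB2 : ∀ s ∈ Finset.range (i + 1),
        (-1 : ℂ) ^ s * (i.choose s : ℂ) * iteratedDerivWithin (i - s) (P (s + 1)) S x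
          = (-1 : ℂ) ^ s * (i.choose s : ℂ) *
              iteratedDerivWithin (i + 1 - (s + 1)) (P (s + 1)) S x := by
      intro s hsmem
      rw [show i - s = i + 1 - (s + 1) by omega]
    rw [Finset.sum_congr rfl hB1, Finset.sum_congr rfl hB2]
    exact aux_pascal i (fun s => iteratedDerivWithin (i + 1 - s) (P s) S x)

/-- pure algebraic identity used for the final combination. -/
private lemma aux_alg (i : ℕ) (A : ℕ → ℂ) :
    (∑ s ∈ Finset.range (i + 1), (-1 : ℂ) ^ s * (i.choose s : ℂ) * A s)
      + ∑ s ∈ Finset.range (i + 1), (-1 : ℂ) ^ s * (i.choose s : ℂ) * A (s + 1)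
    = ∑ s ∈ Finset.range (i + 2), (-1 : ℂ) ^ s *
        (((i + 1).choose s : ℂ) - 2 * (if s = 0 then 0 else (i.choose (s - 1) : ℂ))) * A s := by
  have hext : (∑ s ∈ Finset.range (i + 2), (-1 : ℂ) ^ s * (i.choose s : ℂ) * A s)
      = ∑ s ∈ Finset.range (i + 1), (-1 : ℂ) ^ s * (i.choose s : ℂ) * A s := by
    rw [Finset.sum_range_succ, Nat.choose_eq_zero_of_lt (Nat.lt_succ_self i)]
    simp only [Nat.cast_zero, mul_zero, zero_mul, add_zero]
  have e2 : (∑ s ∈ Finset.range (i + 2), (-1 : ℂ) ^ s * (i.choose s : ℂ) * A s)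
      = (∑ s ∈ Finset.range (i + 1), (-1 : ℂ) ^ (s + 1) * (i.choose (s + 1) : ℂ) * A (s + 1))
        + A 0 := by
    rw [Finset.sum_range_succ' (fun s => (-1 : ℂ) ^ s * (i.choose s : ℂ) * A s) (i + 1)]
    simp
  have e3 : (∑ s ∈ Finset.range (i + 2), (-1 : ℂ) ^ s *
        (((i + 1).choose s : ℂ) - 2 * (if s = 0 then 0 else (i.choose (s - 1) : ℂ))) * A s)
      = (∑ s ∈ Finset.range (i + 1), (-1 : ℂ) ^ (s + 1) *
            (((i + 1).choose (s + 1) : ℂ) - 2 * (i.choose s : ℂ)) * A (s + 1))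
        + A 0 := by
    rw [Finset.sum_range_succ' (fun s => (-1 : ℂ) ^ s *
      (((i + 1).choose s : ℂ) - 2 * (if s = 0 then 0 else (i.choose (s - 1) : ℂ))) * A s) (i + 1)]
    refine congrArg₂ (· + ·) (Finset.sum_congr rfl fun s _ => ?_) (by simp)
    simp [Nat.succ_ne_zero]
  rw [← hext, e2, e3]
  have hterm : ∀ s ∈ Finset.range (i + 1),
      (-1 : ℂ) ^ (s + 1) * (((i + 1).choose (s + 1) : ℂ) - 2 * (i.choose s : ℂ)) * A (s + 1)
        = (-1 : ℂ) ^ (s + 1) * (i.choose (s + 1) : ℂ) * A (s + 1)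
          + (-1 : ℂ) ^ s * (i.choose s : ℂ) * A (s + 1) := by
    intro s _
    rw [Nat.choose_succ_succ i s, Nat.cast_add]
    ring
  rw [Finset.sum_congr rfl hterm, Finset.sum_add_distrib]
  ring

end Aux

/-- for smooth σ, y on an open interval and i, k ≥ 0,
(σ^{(i)} y^{(k)})^{(k+1)} + (σ^{(i)} y^{(k+1)})^{(k)}
  = Σ_{s=0}^{i+1} (-1)^s (C(i+1,s) − 2 C(i,s−1)) (σ y^{(s+k)})^{(i+1−s+k)},
with the convention C(i,−1) = 0. -/
theorem stmt2 (a b : ℝ) (S : Set ℝ) (hS : S = Set.Ioo a b)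
    (σ y : ℝ → ℂ) (hσ : ContDiffOn ℝ (⊤ : ℕ∞) σ S) (hy : ContDiffOn ℝ (⊤ : ℕ∞) y S) (i k : ℕ) :
    ∀ x ∈ S,
      iteratedDerivWithin (k + 1)
        (fun t => iteratedDerivWithin i σ S t * iteratedDerivWithin k y S t) S x +
      iteratedDerivWithin k
        (fun t => iteratedDerivWithin i σ S t * iteratedDerivWithin (k + 1) y S t) S x =
        ∑ s ∈ Finset.range (i + 2),
          (-1 : ℂ) ^ s *
            (((i + 1).choose s : ℂ) -
              2 * (if s = 0 then 0 else (i.choose (s - 1) : ℂ))) *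
            iteratedDerivWithin (i + 1 - s + k)
              (fun t => σ t * iteratedDerivWithin (s + k) y S t) S x := by
  have hs : UniqueDiffOn ℝ S := by rw [hS]; exact isOpen_Ioo.uniqueDiffOn
  intro x hx
  have main : ∀ (m j : ℕ),
      iteratedDerivWithin m
        (fun t => iteratedDerivWithin i σ S t * iteratedDerivWithin j y S t) S x
      = ∑ s ∈ Finset.range (i + 1), (-1 : ℂ) ^ s * (i.choose s : ℂ) *
          iteratedDerivWithin (m + (i - s))
            (fun t => σ t * iteratedDerivWithin (s + j) y S t) S x := by
    intro m j
    set Q : ℕ → ℝ → ℂ := fun s t => σ t * iteratedDerivWithin (s + j) y S t with hQdef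
    have hyj : ContDiffOn ℝ (⊤ : ℕ∞) (iteratedDerivWithin j y S) S := aux_smooth_iter hs hy j
    have hQs : ∀ s, ContDiffOn ℝ (⊤ : ℕ∞) (Q s) S := fun s => hσ.mul (aux_smooth_iter hs hy (s + j))
    have h1 : Set.EqOn
        (fun t => iteratedDerivWithin i σ S t * iteratedDerivWithin j y S t)
        (fun t => ∑ s ∈ Finset.range (i + 1), (-1 : ℂ) ^ s * (i.choose s : ℂ) *
          iteratedDerivWithin (i - s) (Q s) S t) S := by
      intro t ht
      show iteratedDerivWithin i σ S t * iteratedDerivWithin j y S t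
        = ∑ s ∈ Finset.range (i + 1), (-1 : ℂ) ^ s * (i.choose s : ℂ) *
            iteratedDerivWithin (i - s) (Q s) S t
      rw [aux_key hs hσ i (iteratedDerivWithin j y S) hyj t ht]
      refine Finset.sum_congr rfl (fun s _ => ?_)
      congr 1
      refine iteratedDerivWithin_congr (fun u hu => ?_) ht
      show σ u * iteratedDerivWithin s (iteratedDerivWithin j y S) S u = Q s u
      rw [aux_iterIter hs y s j u hu]
    rw [iteratedDerivWithin_congr h1 hx]
    rw [aux_iter_sum hs (Finset.range (i + 1))
      (fun s t => (-1 : ℂ) ^ s * (i.choose s : ℂ) * iteratedDerivWithin (i - s) (Q s) S t) m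
      (fun s _ => ContDiffOn.mul contDiffOn_const (aux_smooth_iter hs (hQs s) (i - s))) x hx]
    refine Finset.sum_congr rfl (fun s _ => ?_)
    rw [aux_iter_cmul hs (aux_smooth_iter hs (hQs s) (i - s)) _ m hx]
    rw [aux_iterIter hs (Q s) m (i - s) x hx]
  have e1 := main (k + 1) k
  have e2 := main k (k + 1)
  rw [e1, e2]
  have f1 : ∀ s ∈ Finset.range (i + 1),
      (-1 : ℂ) ^ s * (i.choose s : ℂ) *
        iteratedDerivWithin (k + 1 + (i - s))
          (fun t => σ t * iteratedDerivWithin (s + k) y S t) S x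
      = (-1 : ℂ) ^ s * (i.choose s : ℂ) *
        iteratedDerivWithin (i + 1 - s + k)
          (fun t => σ t * iteratedDerivWithin (s + k) y S t) S x := by
    intro s hsmem
    have hle := Finset.mem_range.mp hsmem
    rw [show k + 1 + (i - s) = i + 1 - s + k by omega]
  have f2 : ∀ s ∈ Finset.range (i + 1),
      (-1 : ℂ) ^ s * (i.choose s : ℂ) *
        iteratedDerivWithin (k + (i - s))
          (fun t => σ t * iteratedDerivWithin (s + (k + 1)) y S t) S x
      = (-1 : ℂ) ^ s * (i.choose s : ℂ) *
        iteratedDerivWithin (i + 1 - (s + 1) + k)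
          (fun t => σ t * iteratedDerivWithin ((s + 1) + k) y S t) S x := by
    intro s hsmem
    have hle := Finset.mem_range.mp hsmem
    rw [show k + (i - s) = i + 1 - (s + 1) + k by omega,
      show s + (k + 1) = (s + 1) + k by omega]
  rw [Finset.sum_congr rfl f1, Finset.sum_congr rfl f2]
  exact aux_alg i (fun s => iteratedDerivWithin (i + 1 - s + k)
    (fun t => σ t * iteratedDerivWithin (s + k) y S t) S x)
end

section
/- Let σ, σ̃ ∈ L¹(0,∞) (Lebesgue integrable on the half-line), and suppose the function p := σ̃ − σ (after modification on a null set) is locally absolutely continuous on [0,∞) and satisfies p'(x) = σ(x)² − σ̃(x)² for almost every x > 0. Then σ = σ̃ almost everywhere on (0,∞). -/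
open MeasureTheory

/-- Small-interval Grönwall-type bound: if `h ≤ A + ∫ m h` on `[c,d]` and the mass
`∫ m ≤ 1/4`, then `h ≤ (4/3) A` on `[c,d]`. -/
lemma lb_aux (h m : ℝ → ℝ) (c d A : ℝ) (hcd : c ≤ d)
    (hcont : ContinuousOn h (Set.Icc c d))
    (hnn : ∀ x ∈ Set.Icc c d, 0 ≤ h x)
    (hm_int : IntegrableOn m (Set.Ioc c d))
    (hm_nn : ∀ t, 0 ≤ m t)
    (hmh_int : IntegrableOn (fun t => m t * h t) (Set.Ioc c d))
    (hineq : ∀ x ∈ Set.Icc c d, h x ≤ A + ∫ t in Set.Ioc c d, m t * h t)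
    (hsmall : (∫ t in Set.Ioc c d, m t) ≤ 1/4) :
    ∀ x ∈ Set.Icc c d, h x ≤ (4/3) * A := by
  obtain ⟨x₀, hx₀, hmax⟩ := isCompact_Icc.exists_isMaxOn ⟨c, by constructor <;> simp [hcd]⟩ hcont
  set K := h x₀ with hK
  have hKnn : 0 ≤ K := hnn x₀ hx₀
  have hmono : (∫ t in Set.Ioc c d, m t * h t) ≤ ∫ t in Set.Ioc c d, m t * K := by
    apply setIntegral_mono_on hmh_int (hm_int.mul_const K) measurableSet_Ioc
    intro t ht
    exact mul_le_mul_of_nonneg_left (hmax (Set.mem_Icc_of_Ioc ht)) (hm_nn t)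
  have h2 : (∫ t in Set.Ioc c d, m t * K) = (∫ t in Set.Ioc c d, m t) * K := by
    rw [integral_mul_const]
  have hKle : K ≤ A + K/4 := by
    have := hineq x₀ hx₀
    have h3 : (∫ t in Set.Ioc c d, m t) * K ≤ (1/4) * K :=
      mul_le_mul_of_nonneg_right hsmall hKnn
    nlinarith
  intro x hx
  have : h x ≤ K := hmax hx
  linarith

/-- Forward propagation of zeros for the integral inequality. -/
lemma prop_forward (h m : ℝ → ℝ) (c d : ℝ) (hcd : c ≤ d)
    (hm_int : Integrable m)
    (hm_nn : ∀ t, 0 ≤ m t)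
    (hcont : ContinuousOn h (Set.Icc c d))
    (hnn : ∀ x ∈ Set.Icc c d, 0 ≤ h x)
    (hmh_int : IntegrableOn (fun t => m t * h t) (Set.Ioc c d))
    (hineq : ∀ x y, c ≤ x → x ≤ y → y ≤ d → |h y - h x| ≤ ∫ t in Set.Ioc x y, m t * h t)
    (hc0 : h c = 0) :
    ∀ x ∈ Set.Icc c d, h x = 0 := by
  set E : Set ℝ := {x | x ∈ Set.Icc c d ∧ ∀ y ∈ Set.Icc c x, h y = 0} with hE
  have hcE : c ∈ E := ⟨⟨le_refl c, hcd⟩, fun y hy => by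
    have : y = c := le_antisymm hy.2 hy.1
    rw [this]; exact hc0⟩
  have hEbdd : BddAbove E := ⟨d, fun x hx => hx.1.2⟩
  have hEne : E.Nonempty := ⟨c, hcE⟩
  set s := sSup E with hs
  have hcs : c ≤ s := le_csSup hEbdd hcE
  have hsd : s ≤ d := csSup_le hEne (fun x hx => hx.1.2)
  have hIco0 : ∀ y ∈ Set.Ico c s, h y = 0 := by
    intro y hy
    obtain ⟨x, hxE, hyx⟩ := exists_lt_of_lt_csSup hEne hy.2
    exact hxE.2 y ⟨hy.1, hyx.le⟩
  have hhs : h s = 0 := by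
    rcases eq_or_lt_of_le hcs with heq | hlt
    · rw [← heq]; exact hc0
    · have hsmem : s ∈ Set.Icc c d := ⟨hcs, hsd⟩
      have hcw : Filter.Tendsto h (nhdsWithin s (Set.Ico c s)) (nhds (h s)) :=
        ((hcont s hsmem).mono (fun y hy => ⟨hy.1, hy.2.le.trans hsd⟩)).tendsto
      have hzero : Filter.Tendsto h (nhdsWithin s (Set.Ico c s)) (nhds 0) := by
        apply Filter.Tendsto.congr' _ tendsto_const_nhds
        filter_upwards [self_mem_nhdsWithin] with y hy
        exact (hIco0 y hy).symm
      have hne : (nhdsWithin s (Set.Ico c s)).NeBot := by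
        rw [← mem_closure_iff_nhdsWithin_neBot, closure_Ico hlt.ne]
        exact ⟨hcs, le_refl s⟩
      exact tendsto_nhds_unique hcw hzero
  have hsE : s ∈ E := by
    refine ⟨⟨hcs, hsd⟩, fun y hy => ?_⟩
    rcases eq_or_lt_of_le hy.2 with heq | hlt
    · rw [heq]; exact hhs
    · exact hIco0 y ⟨hy.1, hlt⟩
  have hsed : s = d := by
    by_contra hne
    have hslt : s < d := lt_of_le_of_ne hsd hne
    have hFcont : Continuous (fun y => ∫ t in s..y, m t) :=
      intervalIntegral.continuous_primitive (fun a b => hm_int.intervalIntegrable) s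
    have hF0 : (∫ t in s..s, m t) = 0 := intervalIntegral.integral_same
    have hev : ∀ᶠ y in nhds s, (∫ t in s..y, m t) < 1/4 := by
      have := hFcont.continuousAt (x := s)
      rw [ContinuousAt, hF0] at this
      exact this.eventually_lt_const (by norm_num)
    obtain ⟨δ, hδpos, hδ⟩ := Metric.eventually_nhds_iff.1 hev
    set d' := min d (s + δ/2) with hd'
    have hsd' : s < d' := lt_min hslt (by linarith)
    have hd'd : d' ≤ d := min_le_left _ _
    have hsmall : (∫ t in Set.Ioc s d', m t) ≤ 1/4 := by
      have h1 : dist d' s < δ := by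
        rw [Real.dist_eq, abs_of_pos (by linarith)]
        have : d' ≤ s + δ/2 := min_le_right _ _
        linarith
      have := hδ h1
      rw [intervalIntegral.integral_of_le hsd'.le] at this
      exact this.le
    have hsub : Set.Icc s d' ⊆ Set.Icc c d := fun y hy => ⟨hcs.trans hy.1, hy.2.trans hd'd⟩
    have hsubo : Set.Ioc s d' ⊆ Set.Ioc c d := fun y hy => ⟨hcs.trans_lt hy.1, hy.2.trans hd'd⟩
    have key : ∀ x ∈ Set.Icc s d', h x ≤ (4/3) * 0 := by
      apply lb_aux h m s d' 0 hsd'.le (hcont.mono hsub) (fun x hx => hnn x (hsub hx))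
        (hm_int.integrableOn) hm_nn (hmh_int.mono_set hsubo) _ hsmall
      intro x hx
      have h1 : |h x - h s| ≤ ∫ t in Set.Ioc s x, m t * h t := hineq s x hcs hx.1 (hx.2.trans hd'd)
      have h2 : (∫ t in Set.Ioc s x, m t * h t) ≤ ∫ t in Set.Ioc s d', m t * h t := by
        apply setIntegral_mono_set (hmh_int.mono_set hsubo)
        · rw [Filter.EventuallyLE, ae_restrict_iff' measurableSet_Ioc]
          exact Filter.Eventually.of_forall (fun t ht =>
            mul_nonneg (hm_nn t) (hnn t (hsub (Set.mem_Icc_of_Ioc ht))))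
        · exact HasSubset.Subset.eventuallyLE (Set.Ioc_subset_Ioc_right hx.2)
      calc h x = h x - h s + 0 := by rw [hhs]; ring
        _ ≤ |h x - h s| := by rw [add_zero]; exact le_abs_self _
        _ ≤ ∫ t in Set.Ioc s x, m t * h t := h1
        _ ≤ 0 + ∫ t in Set.Ioc s d', m t * h t := by rw [zero_add]; exact h2
    have hd'E : d' ∈ E := by
      refine ⟨⟨hcs.trans hsd'.le, hd'd⟩, fun y hy => ?_⟩
      rcases le_total y s with h1 | h1
      · exact hsE.2 y ⟨hy.1, h1⟩
      · exact le_antisymm (by simpa using key y ⟨h1, hy.2⟩) (hnn y ⟨hy.1, hy.2.trans hd'd⟩)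
    have := le_csSup hEbdd hd'E
    rw [← hs] at this
    linarith
  intro x hx
  exact hsE.2 x ⟨hx.1, hsed ▸ hx.2⟩

/-- Backward propagation of zeros for the integral inequality. -/
lemma prop_backward (h m : ℝ → ℝ) (c d : ℝ) (hcd : c ≤ d)
    (hm_int : Integrable m)
    (hm_nn : ∀ t, 0 ≤ m t)
    (hcont : ContinuousOn h (Set.Icc c d))
    (hnn : ∀ x ∈ Set.Icc c d, 0 ≤ h x)
    (hmh_int : IntegrableOn (fun t => m t * h t) (Set.Ioc c d))
    (hineq : ∀ x y, c ≤ x → x ≤ y → y ≤ d → |h y - h x| ≤ ∫ t in Set.Ioc x y, m t * h t)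
    (hd0 : h d = 0) :
    ∀ x ∈ Set.Icc c d, h x = 0 := by
  set E : Set ℝ := {x | x ∈ Set.Icc c d ∧ ∀ y ∈ Set.Icc x d, h y = 0} with hE
  have hdE : d ∈ E := ⟨⟨hcd, le_refl d⟩, fun y hy => by
    have : y = d := le_antisymm hy.2 hy.1
    rw [this]; exact hd0⟩
  have hEbdd : BddBelow E := ⟨c, fun x hx => hx.1.1⟩
  have hEne : E.Nonempty := ⟨d, hdE⟩
  set s := sInf E with hs
  have hsd : s ≤ d := csInf_le hEbdd hdE
  have hcs : c ≤ s := le_csInf hEne (fun x hx => hx.1.1)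
  have hIoc0 : ∀ y ∈ Set.Ioc s d, h y = 0 := by
    intro y hy
    obtain ⟨x, hxE, hyx⟩ := exists_lt_of_csInf_lt hEne hy.1
    exact hxE.2 y ⟨hyx.le, hy.2⟩
  have hhs : h s = 0 := by
    rcases eq_or_lt_of_le hsd with heq | hlt
    · rw [heq]; exact hd0
    · have hsmem : s ∈ Set.Icc c d := ⟨hcs, hsd⟩
      have hcw : Filter.Tendsto h (nhdsWithin s (Set.Ioc s d)) (nhds (h s)) :=
        ((hcont s hsmem).mono (fun y hy => ⟨hcs.trans hy.1.le, hy.2⟩)).tendsto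
      have hzero : Filter.Tendsto h (nhdsWithin s (Set.Ioc s d)) (nhds 0) := by
        apply Filter.Tendsto.congr' _ tendsto_const_nhds
        filter_upwards [self_mem_nhdsWithin] with y hy
        exact (hIoc0 y hy).symm
      have hne : (nhdsWithin s (Set.Ioc s d)).NeBot := by
        rw [← mem_closure_iff_nhdsWithin_neBot, closure_Ioc hlt.ne]
        exact ⟨le_refl s, hsd⟩
      exact tendsto_nhds_unique hcw hzero
  have hsE : s ∈ E := by
    refine ⟨⟨hcs, hsd⟩, fun y hy => ?_⟩
    rcases eq_or_lt_of_le hy.1 with heq | hlt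
    · rw [← heq]; exact hhs
    · exact hIoc0 y ⟨hlt, hy.2⟩
  have hsec : s = c := by
    by_contra hne
    have hslt : c < s := lt_of_le_of_ne hcs (Ne.symm hne)
    have hFcont : Continuous (fun y => ∫ t in s..y, m t) :=
      intervalIntegral.continuous_primitive (fun a b => hm_int.intervalIntegrable) s
    have hF0 : (∫ t in s..s, m t) = 0 := intervalIntegral.integral_same
    have hev : ∀ᶠ y in nhds s, |∫ t in s..y, m t| < 1/4 := by
      have h1 := hFcont.continuousAt (x := s)
      rw [ContinuousAt, hF0] at h1
      have h2 : Filter.Tendsto (fun y => |∫ t in s..y, m t|) (nhds s) (nhds |0|) :=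
        h1.abs
      rw [abs_zero] at h2
      exact h2.eventually_lt_const (by norm_num)
    obtain ⟨δ, hδpos, hδ⟩ := Metric.eventually_nhds_iff.1 hev
    set c' := max c (s - δ/2) with hc'
    have hc's : c' < s := max_lt hslt (by linarith)
    have hcc' : c ≤ c' := le_max_left _ _
    have hsmall : (∫ t in Set.Ioc c' s, m t) ≤ 1/4 := by
      have h1 : dist c' s < δ := by
        rw [Real.dist_eq, abs_of_neg (by linarith)]
        have : s - δ/2 ≤ c' := le_max_right _ _
        linarith
      have h2 := hδ h1
      rw [intervalIntegral.integral_symm, intervalIntegral.integral_of_le hc's.le,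
        abs_neg] at h2
      exact (le_abs_self _).trans h2.le
    have hsub : Set.Icc c' s ⊆ Set.Icc c d := fun y hy => ⟨hcc'.trans hy.1, hy.2.trans hsd⟩
    have hsubo : Set.Ioc c' s ⊆ Set.Ioc c d := fun y hy => ⟨hcc'.trans_lt hy.1, hy.2.trans hsd⟩
    have key : ∀ x ∈ Set.Icc c' s, h x ≤ (4/3) * 0 := by
      apply lb_aux h m c' s 0 hc's.le (hcont.mono hsub) (fun x hx => hnn x (hsub hx))
        (hm_int.integrableOn) hm_nn (hmh_int.mono_set hsubo) _ hsmall
      intro x hx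
      have h1 : |h s - h x| ≤ ∫ t in Set.Ioc x s, m t * h t :=
        hineq x s (hcc'.trans hx.1) hx.2 hsd
      have h2 : (∫ t in Set.Ioc x s, m t * h t) ≤ ∫ t in Set.Ioc c' s, m t * h t := by
        apply setIntegral_mono_set (hmh_int.mono_set hsubo)
        · rw [Filter.EventuallyLE, ae_restrict_iff' measurableSet_Ioc]
          exact Filter.Eventually.of_forall (fun t ht =>
            mul_nonneg (hm_nn t) (hnn t (hsub (Set.mem_Icc_of_Ioc ht))))
        · exact HasSubset.Subset.eventuallyLE (Set.Ioc_subset_Ioc_left hx.1)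
      calc h x = h x - h s + 0 := by rw [hhs]; ring
        _ ≤ |h x - h s| := by rw [add_zero]; exact le_abs_self _
        _ = |h s - h x| := abs_sub_comm _ _
        _ ≤ ∫ t in Set.Ioc x s, m t * h t := h1
        _ ≤ 0 + ∫ t in Set.Ioc c' s, m t * h t := by rw [zero_add]; exact h2
    have hc'E : c' ∈ E := by
      refine ⟨⟨hcc', hc's.le.trans hsd⟩, fun y hy => ?_⟩
      rcases le_total s y with h1 | h1
      · exact hsE.2 y ⟨h1, hy.2⟩
      · exact le_antisymm (by simpa using key y ⟨hy.1, h1⟩) (hnn y ⟨hcc'.trans hy.1, hy.2⟩)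
    have := csInf_le hEbdd hc'E
    rw [← hs] at this
    linarith
  intro x hx
  exact hsE.2 x ⟨hsec ▸ hx.1, hx.2⟩

/-- Packaged analytic facts on `[0,b]` assuming local integrability of `σ² - σ̃²`. -/
lemma setup_facts (σ σt p : ℝ → ℂ)
    (hp_ae : ∀ᵐ x ∂(volume.restrict (Set.Ioi 0)), p x = σt x - σ x)
    (hpAC : ∀ x : ℝ, 0 ≤ x → p x = p 0 + ∫ t in (0 : ℝ)..x, (σ t ^ 2 - σt t ^ 2))
    (b : ℝ)
    (hI : IntegrableOn (fun t => σ t ^ 2 - σt t ^ 2) (Set.Ioc 0 b)) :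
    ContinuousOn (fun x => ‖p x‖) (Set.Icc 0 b) ∧
    IntegrableOn (fun t =>
      Set.indicator (Set.Ioi 0) (fun s => ‖σ s + σt s‖) t * ‖p t‖) (Set.Ioc 0 b) ∧
    ∀ x y, 0 ≤ x → x ≤ y → y ≤ b →
      |‖p y‖ - ‖p x‖| ≤ ∫ t in Set.Ioc x y,
        Set.indicator (Set.Ioi 0) (fun s => ‖σ s + σt s‖) t * ‖p t‖ := by
  set g : ℝ → ℂ := fun t => σ t ^ 2 - σt t ^ 2 with hg
  set m : ℝ → ℝ := Set.indicator (Set.Ioi 0) (fun s => ‖σ s + σt s‖) with hm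
  have hkey : ∀ᵐ t ∂volume, t ∈ Set.Ioi (0:ℝ) → ‖g t‖ = m t * ‖p t‖ := by
    apply ae_imp_of_ae_restrict
    filter_upwards [hp_ae, ae_restrict_mem measurableSet_Ioi] with t ht htmem
    have h1 : g t = -(p t * (σ t + σt t)) := by
      rw [hg, ht]; ring
    rw [h1, hm, Set.indicator_of_mem htmem]
    rw [norm_neg, norm_mul]
    ring
  have hIg : ∀ x, 0 ≤ x → x ≤ b → IntervalIntegrable g volume 0 x := by
    intro x hx0 hxb
    rw [intervalIntegrable_iff_integrableOn_Ioc_of_le hx0]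
    exact hI.mono_set (Set.Ioc_subset_Ioc_right hxb)
  have hdiff : ∀ x y, 0 ≤ x → x ≤ y → y ≤ b →
      p y - p x = ∫ t in Set.Ioc x y, g t := by
    intro x y hx0 hxy hyb
    have h1 := hpAC x hx0
    have h2 := hpAC y (hx0.trans hxy)
    rw [← intervalIntegral.integral_of_le hxy]
    rw [h1, h2]
    have := intervalIntegral.integral_interval_sub_left (hIg y (hx0.trans hxy) hyb)
      (hIg x hx0 (hxy.trans hyb))
    rw [← this]; ring
  have hmh : IntegrableOn (fun t => m t * ‖p t‖) (Set.Ioc 0 b) := by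
    apply (hI.norm).congr
    rw [Filter.EventuallyEq, ae_restrict_iff' measurableSet_Ioc]
    filter_upwards [hkey] with t ht htmem
    exact ht (Set.Ioc_subset_Ioi_self htmem)
  refine ⟨?_, hmh, ?_⟩
  · set G : ℝ → ℂ := Set.indicator (Set.Ioc 0 b) g with hG
    have hGint : Integrable G := hI.integrable_indicator measurableSet_Ioc
    have hcont : Continuous fun x => p 0 + ∫ t in (0:ℝ)..x, G t := by
      apply Continuous.add continuous_const
      exact intervalIntegral.continuous_primitive (fun a b => hGint.intervalIntegrable) 0
    apply (continuous_norm.comp hcont).continuousOn.congr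
    intro x hx
    have h1 := hpAC x hx.1
    have h2 : (∫ t in (0:ℝ)..x, G t) = ∫ t in (0:ℝ)..x, g t := by
      rw [intervalIntegral.integral_of_le hx.1, intervalIntegral.integral_of_le hx.1]
      rw [hG, setIntegral_indicator measurableSet_Ioc,
        Set.inter_eq_left.2 (Set.Ioc_subset_Ioc_right hx.2)]
    simp only [Function.comp]
    rw [h1, h2]
  · intro x y hx0 hxy hyb
    have h1 : |‖p y‖ - ‖p x‖| ≤ ‖p y - p x‖ := abs_norm_sub_norm_le _ _
    rw [hdiff x y hx0 hxy hyb] at h1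
    refine h1.trans ((norm_integral_le_integral_norm _).trans ?_)
    rw [setIntegral_congr_ae measurableSet_Ioc]
    filter_upwards [hkey] with t ht htmem
    exact ht (lt_of_le_of_lt hx0 htmem.1)

/-- n = 2, i₀ = 1, half-line: if σ, σ̃ ∈ L¹(0,∞), p = σ̃ − σ a.e.,
p is locally absolutely continuous on [0,∞) (encoded by the integral formula)
with p' = σ² − σ̃² a.e., then σ = σ̃ a.e. on (0,∞). -/
theorem stmt10 (σ σt p : ℝ → ℂ)
    (hσ : IntegrableOn σ (Set.Ioi 0))
    (hσt : IntegrableOn σt (Set.Ioi 0))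
    (hp_ae : ∀ᵐ x ∂(volume.restrict (Set.Ioi 0)), p x = σt x - σ x)
    (hpAC : ∀ x : ℝ, 0 ≤ x → p x = p 0 + ∫ t in (0 : ℝ)..x, (σ t ^ 2 - σt t ^ 2)) :
    ∀ᵐ x ∂(volume.restrict (Set.Ioi 0)), σ x = σt x := by
  set g : ℝ → ℂ := fun t => σ t ^ 2 - σt t ^ 2 with hg
  set m : ℝ → ℝ := Set.indicator (Set.Ioi 0) (fun s => ‖σ s + σt s‖) with hmdef
  have hm_nn : ∀ t, 0 ≤ m t := fun t => Set.indicator_nonneg (fun s _ => norm_nonneg _) t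
  have hm_int : Integrable m := by
    have h1 : IntegrableOn (fun s => ‖σ s + σt s‖) (Set.Ioi 0) := (hσ.add hσt).norm
    exact h1.integrable_indicator measurableSet_Ioi
  have hf_int : IntegrableOn (fun x => σt x - σ x) (Set.Ioi 0) := hσt.sub hσ
  -- an integrable function can't be a.e. bounded below in norm by ε > 0 on (a, ∞)
  have hcontradict : ∀ a ε, 0 ≤ a → 0 < ε →
      ¬ (∀ᵐ x ∂(volume.restrict (Set.Ioi a)), ε ≤ ‖σt x - σ x‖) := by
    intro a ε ha hε hae
    have hfint : IntegrableOn (fun x => σt x - σ x) (Set.Ioi a) :=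
      hf_int.mono_set (Set.Ioi_subset_Ioi ha)
    have h1 := hfint.measure_norm_ge_lt_top hε
    have h2 : (Set.univ : Set ℝ) ≤ᵐ[volume.restrict (Set.Ioi a)]
        {x | ε ≤ ‖σt x - σ x‖} := hae.mono (fun x hx _ => hx)
    have h3 := measure_mono_ae h2
    rw [Measure.restrict_apply_univ, Real.volume_Ioi] at h3
    exact absurd (lt_of_le_of_lt h3 h1) (lt_irrefl ⊤)
  by_cases hcase : ∀ x, IntegrableOn g (Set.Ioc 0 x)
  · -- Case A: σ² - σ̃² is locally integrable on [0,∞)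
    -- choose a tail point a with small mass
    obtain ⟨a, hamass, ha⟩ : ∃ a, ((∫ t in Set.Ioi 0, m t) - 1/4 < ∫ t in (0:ℝ)..a, m t)
        ∧ (0:ℝ) ≤ a := by
      have hL := intervalIntegral_tendsto_integral_Ioi 0 hm_int.integrableOn
        (Filter.tendsto_id (α := ℝ))
      exact ((hL.eventually_const_lt (by linarith [le_refl (∫ t in Set.Ioi 0, m t)] :
        (∫ t in Set.Ioi 0, m t) - 1/4 < ∫ t in Set.Ioi 0, m t)).and
        (Filter.eventually_ge_atTop 0)).exists
    have htail : (∫ t in Set.Ioi a, m t) ≤ 1/4 := by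
      have hsplit : (∫ t in Set.Ioc 0 a, m t) + (∫ t in Set.Ioi a, m t)
          = ∫ t in Set.Ioi 0, m t := by
        rw [← setIntegral_union (Set.Ioc_disjoint_Ioi le_rfl) measurableSet_Ioi
          hm_int.integrableOn hm_int.integrableOn, Set.Ioc_union_Ioi_eq_Ioi ha]
      rw [intervalIntegral.integral_of_le ha] at hamass
      linarith
    have hIocsmall : ∀ x, a ≤ x → (∫ t in Set.Ioc a x, m t) ≤ 1/4 := by
      intro x hax
      refine le_trans ?_ htail
      apply setIntegral_mono_set hm_int.integrableOn
        (Filter.Eventually.of_forall (fun t => hm_nn t))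
        (HasSubset.Subset.eventuallyLE Set.Ioc_subset_Ioi_self)
    -- lower bound for ‖p x‖, x ≥ a
    have hlower : ∀ x, a ≤ x → (2/3) * ‖p a‖ ≤ ‖p x‖ := by
      intro x hax
      obtain ⟨hcont, hmh, hineq⟩ := setup_facts σ σt p hp_ae hpAC x (hcase x)
      have hsubo : Set.Ioc a x ⊆ Set.Ioc 0 x := Set.Ioc_subset_Ioc_left ha
      have hK : ∀ y ∈ Set.Icc a x, ‖p y‖ ≤ (4/3) * ‖p a‖ := by
        apply lb_aux (fun y => ‖p y‖) m a x (‖p a‖) hax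
          (hcont.mono (fun y hy => ⟨ha.trans hy.1, hy.2⟩)) (fun y _ => norm_nonneg _)
          hm_int.integrableOn hm_nn (hmh.mono_set hsubo) ?_ (hIocsmall x hax)
        intro y hy
        have h1 := hineq a y ha hy.1 hy.2
        have h2 : (∫ t in Set.Ioc a y, m t * ‖p t‖) ≤ ∫ t in Set.Ioc a x, m t * ‖p t‖ := by
          apply setIntegral_mono_set (hmh.mono_set hsubo)
            (Filter.Eventually.of_forall (fun t => mul_nonneg (hm_nn t) (norm_nonneg _)))
            (HasSubset.Subset.eventuallyLE (Set.Ioc_subset_Ioc_right hy.2))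
        have h3 := le_abs_self (‖p y‖ - ‖p a‖)
        linarith
      obtain ⟨hcont2, hmh2, hineq2⟩ := setup_facts σ σt p hp_ae hpAC x (hcase x)
      have h1 := hineq a x ha hax le_rfl
      have h2 : (∫ t in Set.Ioc a x, m t * ‖p t‖)
          ≤ ∫ t in Set.Ioc a x, m t * ((4/3) * ‖p a‖) := by
        apply setIntegral_mono_on (hmh.mono_set hsubo)
          (hm_int.integrableOn.mul_const _) measurableSet_Ioc
        intro t ht
        exact mul_le_mul_of_nonneg_left (hK t (Set.mem_Icc_of_Ioc ht)) (hm_nn t)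
      have h3 : (∫ t in Set.Ioc a x, m t * ((4/3) * ‖p a‖))
          = (∫ t in Set.Ioc a x, m t) * ((4/3) * ‖p a‖) := integral_mul_const _ _
      have h4 : (∫ t in Set.Ioc a x, m t) * ((4/3) * ‖p a‖)
          ≤ (1/4) * ((4/3) * ‖p a‖) :=
        mul_le_mul_of_nonneg_right (hIocsmall x hax) (by positivity)
      have h5 := neg_abs_le (‖p x‖ - ‖p a‖)
      linarith
    -- p a = 0
    have hpa : ‖p a‖ = 0 := by
      by_contra hne
      have hpos : 0 < ‖p a‖ := lt_of_le_of_ne (norm_nonneg _) (Ne.symm hne)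
      apply hcontradict a ((2/3) * ‖p a‖) ha (by positivity)
      have hae : ∀ᵐ x ∂(volume.restrict (Set.Ioi a)), p x = σt x - σ x :=
        ae_restrict_of_ae_restrict_of_subset (Set.Ioi_subset_Ioi ha) hp_ae
      filter_upwards [hae, ae_restrict_mem measurableSet_Ioi] with x hx hxa
      rw [← hx]; exact hlower x hxa.le
    -- p ≡ 0 on [0, a]
    obtain ⟨hcontA, hmhA, hineqA⟩ := setup_facts σ σt p hp_ae hpAC a (hcase a)
    have hz1 : ∀ x ∈ Set.Icc (0:ℝ) a, ‖p x‖ = 0 :=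
      prop_backward (fun y => ‖p y‖) m 0 a ha hm_int hm_nn hcontA
        (fun x _ => norm_nonneg _) hmhA hineqA hpa
    -- p ≡ 0 on [a, ∞)
    have hz2 : ∀ x, a ≤ x → ‖p x‖ = 0 := by
      intro x hax
      obtain ⟨hcont, hmh, hineq⟩ := setup_facts σ σt p hp_ae hpAC x (hcase x)
      have hsubo : Set.Ioc a x ⊆ Set.Ioc 0 x := Set.Ioc_subset_Ioc_left ha
      have key : ∀ y ∈ Set.Icc a x, ‖p y‖ ≤ (4/3) * 0 := by
        apply lb_aux (fun y => ‖p y‖) m a x 0 hax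
          (hcont.mono (fun y hy => ⟨ha.trans hy.1, hy.2⟩)) (fun y _ => norm_nonneg _)
          hm_int.integrableOn hm_nn (hmh.mono_set hsubo) ?_ (hIocsmall x hax)
        intro y hy
        have h1 := hineq a y ha hy.1 hy.2
        have h2 : (∫ t in Set.Ioc a y, m t * ‖p t‖) ≤ ∫ t in Set.Ioc a x, m t * ‖p t‖ := by
          apply setIntegral_mono_set (hmh.mono_set hsubo)
            (Filter.Eventually.of_forall (fun t => mul_nonneg (hm_nn t) (norm_nonneg _)))
            (HasSubset.Subset.eventuallyLE (Set.Ioc_subset_Ioc_right hy.2))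
        rw [hpa] at h1
        have h3 := le_abs_self (‖p y‖ - 0)
        show ‖p y‖ ≤ 0 + ∫ t in Set.Ioc a x, m t * ‖p t‖
        linarith
      have := key x ⟨hax, le_refl x⟩
      have hnn := norm_nonneg (p x)
      linarith
    have hzero : ∀ x, 0 < x → p x = 0 := by
      intro x hx
      rcases le_total x a with h | h
      · exact norm_eq_zero.1 (hz1 x ⟨hx.le, h⟩)
      · exact norm_eq_zero.1 (hz2 x h)
    filter_upwards [hp_ae, ae_restrict_mem measurableSet_Ioi] with x hx hxpos
    have h0 : σt x - σ x = 0 := by rw [← hx]; exact hzero x hxpos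
    exact (sub_eq_zero.mp h0).symm
  · -- Case B: σ² - σ̃² fails to be integrable on some (0, x]
    push_neg at hcase
    set S : Set ℝ := {x | ¬ IntegrableOn g (Set.Ioc 0 x)} with hS
    have hSne : S.Nonempty := hcase
    have hSpos : ∀ x ∈ S, 0 < x := by
      intro x hx
      by_contra h
      push_neg at h
      exact hx (by rw [Set.Ioc_eq_empty (not_lt.2 h)]; exact integrableOn_empty)
    have hSbdd : BddBelow S := ⟨0, fun x hx => (hSpos x hx).le⟩
    set T := sInf S with hT
    have hT0 : 0 ≤ T := le_csInf hSne (fun x hx => (hSpos x hx).le)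
    have hafter : ∀ x, T < x → ¬ IntegrableOn g (Set.Ioc 0 x) := by
      intro x hTx hint
      obtain ⟨y, hyS, hyx⟩ := exists_lt_of_csInf_lt hSne hTx
      exact hyS (hint.mono_set (Set.Ioc_subset_Ioc_right hyx.le))
    have hbefore : ∀ y, y < T → IntegrableOn g (Set.Ioc 0 y) := by
      intro y hy
      by_contra h
      exact absurd (csInf_le hSbdd h) (not_le.2 hy)
    have hpconst : ∀ x, T < x → p x = p 0 := by
      intro x hTx
      have hx0 : 0 ≤ x := hT0.trans hTx.le
      rw [hpAC x hx0, intervalIntegral.integral_of_le hx0,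
        integral_undef (hafter x hTx), add_zero]
    have haeT : ∀ᵐ x ∂(volume.restrict (Set.Ioi T)), σt x - σ x = p 0 := by
      have h1 : ∀ᵐ x ∂(volume.restrict (Set.Ioi T)), p x = σt x - σ x :=
        ae_restrict_of_ae_restrict_of_subset (Set.Ioi_subset_Ioi hT0) hp_ae
      filter_upwards [h1, ae_restrict_mem measurableSet_Ioi] with x hx hxT
      rw [← hx, hpconst x hxT]
    have hp0 : p 0 = 0 := by
      by_contra hne
      have hpos : 0 < ‖p 0‖ := norm_pos_iff.2 hne
      apply hcontradict T (‖p 0‖) hT0 hpos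
      filter_upwards [haeT] with x hx
      rw [hx]
    have haeT0 : ∀ᵐ x ∂(volume.restrict (Set.Ioi T)), σt x - σ x = 0 := by
      filter_upwards [haeT] with x hx
      rw [hx, hp0]
    have hIco : ∀ x, 0 ≤ x → x < T → ‖p x‖ = 0 := by
      intro x hx0 hxT
      obtain ⟨hcont, hmh, hineq⟩ := setup_facts σ σt p hp_ae hpAC x (hbefore x hxT)
      exact prop_forward (fun y => ‖p y‖) m 0 x hx0 hm_int hm_nn hcont
        (fun _ _ => norm_nonneg _) hmh hineq (by simp [hp0]) x ⟨hx0, le_refl x⟩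
    have hTne : ∀ᵐ x : ℝ ∂volume, x ≠ T := by
      rw [ae_iff]
      have : {x : ℝ | ¬ x ≠ T} = {T} := by ext y; simp
      rw [this]
      exact Real.volume_singleton
    have hg1 : ∀ᵐ x ∂volume, x ∈ Set.Ioi (0:ℝ) → p x = σt x - σ x :=
      ae_imp_of_ae_restrict hp_ae
    have hg2 : ∀ᵐ x ∂volume, x ∈ Set.Ioi T → σt x - σ x = 0 :=
      ae_imp_of_ae_restrict haeT0
    rw [ae_restrict_iff' measurableSet_Ioi]
    filter_upwards [hg1, hg2, hTne] with x h1 h2 h3 hx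
    rcases lt_trichotomy x T with hlt | heq | hgt
    · have hzx : p x = 0 := norm_eq_zero.1 (hIco x (le_of_lt hx) hlt)
      have h4 := h1 hx
      rw [hzx] at h4
      exact (sub_eq_zero.mp h4.symm).symm
    · exact absurd heq h3
    · exact (sub_eq_zero.mp (h2 hgt)).symm
end
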